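/- Let A be a rigid abelian symmetric monoidal category in which End(1) is a field. Then A is integral: for morphisms f and g in A, if f ⊗ g = 0 then f = 0 or g = 0. -/

import Mathlib

/-!
Tensoring with a dualisable object is exact, since it has adjoints on both sides. For a subobject
`u : U ⟶ 𝟙_ A` this gives `U ⊗ coker u = 0`, so `U ◁ u` is an isomorphism; hence the evaluation of
`U` factors through `u`, and because the categorical dimension of `U` acts as the identity on `U`,
the factorisation yields a retraction `r` of `u`. Then `r ≫ u` is an idempotent of the field
`End (𝟙_ A)`, so every subobject of the unit is `0` or `𝟙_ A`, and every nonzero morphism out of the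
unit, in particular the coevaluation of a nonzero object, is a monomorphism. Whiskering with it shows
that `U ⊗ V ≠ 0` for nonzero `U` and `V`. Finally `image f ⊗ image g` sits between an epimorphism
and a monomorphism composing to `f ⊗ g = 0`, so it vanishes, and so does `image f` or `image g`.
-/

open CategoryTheory CategoryTheory.Limits CategoryTheory.MonoidalCategory

namespace CategoryTheory

variable {A : Type*} [Category A] [MonoidalCategory A]

section Exactness

instance mono_whiskerLeft (X : A) [HasRightDual X] {P Q : A} (h : P ⟶ Q) [Mono h] :
    Mono (X ◁ h) :=
  have := Functor.preservesMonomorphisms_of_adjunction (tensorLeftAdjunction X Xᘁ)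
  (tensorLeft X).map_mono h

instance epi_whiskerLeft (X : A) [HasLeftDual X] {P Q : A} (h : P ⟶ Q) [Epi h] :
    Epi (X ◁ h) :=
  have := Functor.preservesEpimorphisms_of_adjunction (tensorLeftAdjunction (ᘁX) X)
  (tensorLeft X).map_epi h

instance mono_whiskerRight (X : A) [HasLeftDual X] {P Q : A} (h : P ⟶ Q) [Mono h] :
    Mono (h ▷ X) :=
  have := Functor.preservesMonomorphisms_of_adjunction (tensorRightAdjunction (ᘁX) X)
  (tensorRight X).map_mono h

instance epi_whiskerRight (X : A) [HasRightDual X] {P Q : A} (h : P ⟶ Q) [Epi h] :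
    Epi (h ▷ X) :=
  have := Functor.preservesEpimorphisms_of_adjunction (tensorRightAdjunction X Xᘁ)
  (tensorRight X).map_epi h

variable [RigidCategory A]

instance mono_tensorHom {P Q R S : A} (a : P ⟶ Q) (b : R ⟶ S) [Mono a] [Mono b] :
    Mono (a ⊗ₘ b) := by
  rw [MonoidalCategory.tensorHom_def]
  infer_instance

instance epi_tensorHom {P Q R S : A} (a : P ⟶ Q) (b : R ⟶ S) [Epi a] [Epi b] :
    Epi (a ⊗ₘ b) := by
  rw [MonoidalCategory.tensorHom_def]
  infer_instance

end Exactness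

lemma whiskerLeft_rightUnitor_eq_whiskerRight_leftUnitor {U : A} (u : U ⟶ 𝟙_ A) [Mono u] :
    U ◁ u ≫ (ρ_ U).hom = u ▷ U ≫ (λ_ U).hom := by
  rw [← cancel_mono u]
  simp only [Category.assoc, ← rightUnitor_naturality, ← leftUnitor_naturality]
  rw [whisker_exchange_assoc, unitors_equal]

section Dimension

variable {U : A} [HasRightDual U]

def unitMate (u : U ⟶ 𝟙_ A) : 𝟙_ A ⟶ Uᘁ :=
  η_ U Uᘁ ≫ u ▷ Uᘁ ≫ (λ_ Uᘁ).hom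

lemma leftUnitor_inv_unitMate_whiskerRight_evaluation (u : U ⟶ 𝟙_ A) :
    (λ_ U).inv ≫ unitMate u ▷ U ≫ ε_ U Uᘁ = u := by
  simp only [unitMate, comp_whiskerRight, Category.assoc, leftUnitor_whiskerRight]
  rw [associator_naturality_left_assoc, ← leftUnitor_naturality, ← whisker_exchange_assoc,
    ExactPairing.evaluation_coevaluation_assoc]
  simp [unitors_equal]

lemma comp_coevaluation_of_mono_unit (u : U ⟶ 𝟙_ A) [Mono u] :
    u ≫ η_ U Uᘁ = (ρ_ U).inv ≫ U ◁ unitMate u := by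
  have hswap : U ◁ u = (u ▷ U ≫ (λ_ U).hom) ≫ (ρ_ U).inv := by
    rw [← whiskerLeft_rightUnitor_eq_whiskerRight_leftUnitor]
    simp
  rw [unitMate, whiskerLeft_comp, whiskerLeft_comp, whisker_assoc_symm, hswap]
  simp only [comp_whiskerRight, Category.assoc]
  rw [← associator_inv_naturality_left_assoc, whisker_exchange_assoc,
    ← rightUnitor_inv_naturality_assoc]
  simp [unitors_equal]

variable [BraidedCategory A]

def dim (U : A) [HasRightDual U] : End (𝟙_ A) :=
  η_ U Uᘁ ≫ (β_ U Uᘁ).hom ≫ ε_ U Uᘁ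

lemma comp_dim_of_mono_unit (u : U ⟶ 𝟙_ A) [Mono u] : u ≫ dim U = u :=
  calc u ≫ dim U = (ρ_ U).inv ≫ (U ◁ unitMate u ≫ (β_ U Uᘁ).hom) ≫ ε_ U Uᘁ := by
        rw [dim, reassoc_of% comp_coevaluation_of_mono_unit u, Category.assoc]
    _ = (ρ_ U).inv ≫ ((β_ U (𝟙_ A)).hom ≫ unitMate u ▷ U) ≫ ε_ U Uᘁ := by
        rw [BraidedCategory.braiding_naturality_right]
    _ = (λ_ U).inv ≫ unitMate u ▷ U ≫ ε_ U Uᘁ := by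
        simp [braiding_tensorUnit_right]
    _ = u := leftUnitor_inv_unitMate_whiskerRight_evaluation u

end Dimension

section Preadditive

variable [Preadditive A] [MonoidalPreadditive A]

lemma isZero_tensor_of_isZero_left {P : A} (hP : IsZero P) (X : A) : IsZero (P ⊗ X) := by
  rw [IsZero.iff_id_eq_zero] at hP ⊢
  rw [← id_whiskerRight, hP, MonoidalPreadditive.zero_whiskerRight]

lemma coevaluation_ne_zero {U : A} [HasRightDual U] (hU : ¬ IsZero U) : η_ U Uᘁ ≠ 0 := by
  intro hη
  apply hU
  have hzigzag := ExactPairing.evaluation_coevaluation U Uᘁ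
  rw [hη, MonoidalPreadditive.zero_whiskerRight, zero_comp] at hzigzag
  rw [IsZero.iff_id_eq_zero]
  simpa using ((λ_ U).inv ≫= hzigzag =≫ (ρ_ U).hom).symm

end Preadditive

section Abelian

variable [Abelian A] [RigidCategory A]

lemma isZero_tensor_cokernel_of_mono_unit {U : A} (u : U ⟶ 𝟙_ A) [Mono u] :
    IsZero (U ⊗ cokernel u) := by
  have hcomp : U ◁ cokernel.π u ≫ u ▷ cokernel u = 0 := by
    rw [whisker_exchange, whiskerRight_id, id_whiskerLeft]
    simp [unitors_equal]
  exact IsZero.of_mono_eq_zero _ (zero_of_epi_comp _ hcomp)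

lemma isIso_whiskerLeft_of_mono_unit {U : A} (u : U ⟶ 𝟙_ A) [Mono u] : IsIso (U ◁ u) := by
  have := (tensorLeftAdjunction (ᘁU) U).leftAdjoint_preservesColimits
  have : Epi (U ◁ u) := Preadditive.epi_of_isZero_cokernel' _
    (isColimitOfHasCokernelOfPreservesColimit (tensorLeft U) u)
    (isZero_tensor_cokernel_of_mono_unit u)
  exact isIso_of_mono_of_epi _

variable [BraidedCategory A]

lemma exists_retraction_of_mono_unit {U : A} (u : U ⟶ 𝟙_ A) [Mono u] :
    ∃ r : 𝟙_ A ⟶ U, u ≫ r = 𝟙 U := by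
  have := isIso_whiskerLeft_of_mono_unit u
  obtain ⟨s, hs⟩ : ∃ s : Uᘁ ⊗ U ⟶ U, s ≫ u = ε_ U Uᘁ := by
    refine ⟨(tensorLeftHomEquiv U U Uᘁ U).symm ((ρ_ U).inv ≫ inv (U ◁ u)), ?_⟩
    apply (tensorLeftHomEquiv U U Uᘁ (𝟙_ A)).injective
    rw [tensorLeftHomEquiv_naturality, Equiv.apply_symm_apply]
    simp [tensorLeftHomEquiv]
  refine ⟨η_ U Uᘁ ≫ (β_ U Uᘁ).hom ≫ s, ?_⟩
  rw [← cancel_mono u]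
  simp only [Category.assoc, hs, Category.id_comp]
  exact comp_dim_of_mono_unit u

lemma isZero_or_isIso_of_mono_unit (hA : IsField (End (𝟙_ A))) {U : A} (u : U ⟶ 𝟙_ A)
    [Mono u] : IsZero U ∨ IsIso u := by
  obtain ⟨r, hr⟩ := exists_retraction_of_mono_unit u
  have := hA.isDomain
  let e : End (𝟙_ A) := r ≫ u
  have hidem : IsIdempotentElem e := by
    change (r ≫ u) ≫ r ≫ u = r ≫ u
    simp [reassoc_of% hr]
  rcases IsIdempotentElem.iff_eq_zero_or_one.mp hidem with h0 | h1
  · left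
    rw [IsZero.iff_id_eq_zero, ← hr]
    calc u ≫ r = u ≫ e ≫ r := by simp [e, reassoc_of% hr]
      _ = 0 := by simp [h0]
  · exact Or.inr ⟨r, hr, h1⟩

lemma mono_of_ne_zero_of_unit (hA : IsField (End (𝟙_ A))) {P : A} (a : 𝟙_ A ⟶ P)
    (ha : a ≠ 0) : Mono a := by
  rcases isZero_or_isIso_of_mono_unit hA (kernel.ι a) with hK | hK
  · exact Abelian.mono_of_kernel_ι_eq_zero a (hK.eq_of_src _ _)
  · exact absurd ((Preadditive.IsIso.comp_left_eq_zero _ _).mp (kernel.condition a)) ha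

lemma isZero_of_isZero_tensor [MonoidalPreadditive A] (hA : IsField (End (𝟙_ A))) {U V : A}
    (hUV : IsZero (U ⊗ V)) (hV : ¬ IsZero V) : IsZero U := by
  have := mono_of_ne_zero_of_unit hA _ (coevaluation_ne_zero hV)
  have hzero : IsZero (U ⊗ V ⊗ Vᘁ) :=
    (isZero_tensor_of_isZero_left hUV Vᘁ).of_iso (α_ U V Vᘁ).symm
  exact (IsZero.of_mono (U ◁ η_ V Vᘁ) hzero).of_iso (ρ_ U).symm

end Abelian

end CategoryTheory

/-- A rigid abelian symmetric monoidal category with `End(1)` a field is integral: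
`f ⊗ g = 0` implies `f = 0` or `g = 0`. -/
theorem rigid_abelian_integral
    {A : Type*} [Category A] [Abelian A]
    [MonoidalCategory A] [SymmetricCategory A] [MonoidalPreadditive A]
    [RigidCategory A] (hA : IsField (End (𝟙_ A)))
    {X Y Z W : A} (f : X ⟶ Y) (g : Z ⟶ W) (h : f ⊗ₘ g = 0) :
    f = 0 ∨ g = 0 := by
  refine or_iff_not_imp_right.mpr fun hg => ?_
  have himages : IsZero (image f ⊗ image g) := by
    refine IsZero.of_mono_eq_zero (image.ι f ⊗ₘ image.ι g)
      (zero_of_epi_comp (factorThruImage f ⊗ₘ factorThruImage g) ?_)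
    rw [tensorHom_comp_tensorHom, image.fac, image.fac, h]
  have hg' : ¬ IsZero (image g) := fun hz => hg (eq_zero_of_image_eq_zero (hz.eq_of_src _ _))
  exact eq_zero_of_image_eq_zero ((isZero_of_isZero_tensor hA himages hg').eq_of_src _ _)
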